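/- Consider the n × n gridworld with positions in Fin n × Fin n (n ≥ 1) and the four clipped movement actions (Right, Left, Up, Down as clipped coordinate increments/decrements). Suppose a sequence of actions takes start position p to goal position q and its length equals the Manhattan distance between p and q. Let r, l, u, d be the numbers of Right, Left, Up, Down actions in the sequence respectively. Then: (i) min r l = 0 and min u d = 0 (the sequence never contains both of a pair of opposite actions); (ii) the goal is determined by the start and the action counts, namely q.1 = p.1 + r − l and q.2 = p.2 + u − d (as integers); and (iii) r + l + u + d equals the Manhattan distance between p and q. -/
import Mathlib


/-- The four cardinal movement actions of the gridworld. -/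
inductive GridAct : Type
  | right | left | up | down
  deriving DecidableEq

/-- Clipped movement dynamics on the `n × n` grid: moving off the edge of the
grid leaves the position unchanged. -/
def gridStep {n : ℕ} : GridAct → Fin n × Fin n → Fin n × Fin n
  | .right, (x, y) => (⟨min (x.val + 1) (n - 1), by have := x.isLt; omega⟩, y)
  | .left,  (x, y) => (⟨x.val - 1, by have := x.isLt; omega⟩, y)
  | .up,    (x, y) => (x, ⟨min (y.val + 1) (n - 1), by have := y.isLt; omega⟩)
  | .down,  (x, y) => (x, ⟨y.val - 1, by have := y.isLt; omega⟩)

/-- Apply a sequence of actions from a starting position. -/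
def gridRun {n : ℕ} (as : List GridAct) (p : Fin n × Fin n) : Fin n × Fin n :=
  as.foldl (fun c a => gridStep a c) p

/-- Manhattan distance on the grid, with absolute coordinate differences
computed via truncated subtraction on `ℕ`. -/
def manhattan {n : ℕ} (p q : Fin n × Fin n) : ℕ :=
  ((p.1.val - q.1.val) + (q.1.val - p.1.val)) + ((p.2.val - q.2.val) + (q.2.val - p.2.val))

lemma step_manhattan {n : ℕ} (a : GridAct) (p q : Fin n × Fin n) :
    manhattan p q ≤ manhattan (gridStep a p) q + 1 := by
  obtain ⟨⟨x,hx⟩,⟨y,hy⟩⟩ := p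
  obtain ⟨⟨qx,hqx⟩,⟨qy,hqy⟩⟩ := q
  cases a <;> simp [gridStep, manhattan] <;> omega

lemma run_manhattan {n : ℕ} : ∀ (as : List GridAct) (p q : Fin n × Fin n),
    gridRun as p = q → manhattan p q ≤ as.length := by
  intro as
  induction as with
  | nil => intro p q h; simp [gridRun] at h; subst h; simp [manhattan]
  | cons a t ih =>
    intro p q h
    simp only [gridRun, List.foldl_cons] at h
    have := ih (gridStep a p) q h
    have := step_manhattan a p q
    simp only [List.length_cons]
    omega

lemma count_sum (as : List GridAct) :
    as.count .right + as.count .left + as.count .up + as.count .down = as.length := by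
  induction as with
  | nil => simp
  | cons a t ih => cases a <;> simp [List.count_cons] <;> omega

lemma main_aux {n : ℕ} : ∀ (as : List GridAct) (p q : Fin n × Fin n),
    gridRun as p = q → as.length = manhattan p q →
    min (as.count .right) (as.count .left) = 0 ∧
    min (as.count .up) (as.count .down) = 0 ∧
    (q.1.val : ℤ) = p.1.val + as.count .right - as.count .left ∧
    (q.2.val : ℤ) = p.2.val + as.count .up - as.count .down := by
  intro as
  induction as with
  | nil =>
    intro p q h _
    simp [gridRun] at h; subst h; simp
  | cons a t ih =>
    intro p q hrun hlen
    simp only [gridRun, List.foldl_cons] at hrun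
    have h1 := run_manhattan t (gridStep a p) q hrun
    have h2 := step_manhattan a p q
    simp only [List.length_cons] at hlen
    have htight : t.length = manhattan (gridStep a p) q := by omega
    have IH := ih (gridStep a p) q hrun htight
    obtain ⟨⟨x,hx⟩,⟨y,hy⟩⟩ := p
    obtain ⟨⟨qx,hqx⟩,⟨qy,hqy⟩⟩ := q
    cases a <;>
      simp only [gridStep, manhattan] at htight IH hlen <;>
      simp [List.count_cons, manhattan] <;>
      omega

/-- For an optimal action sequence (one taking `p` to `q` in Manhattan-distance
many steps): (i) it never contains both of a pair of opposite actions; (ii) the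
goal is determined by the start position and the action counts; and (iii) the
total number of actions equals the Manhattan distance. -/
theorem grid_optimal_action_counts (n : ℕ) (hn : 1 ≤ n)
    (p q : Fin n × Fin n) (as : List GridAct)
    (hrun : gridRun as p = q) (hlen : as.length = manhattan p q)
    (r l u d : ℕ)
    (hr : r = as.count GridAct.right) (hl : l = as.count GridAct.left)
    (hu : u = as.count GridAct.up) (hd : d = as.count GridAct.down) :
    min r l = 0 ∧ min u d = 0 ∧
    (q.1.val : ℤ) = (p.1.val : ℤ) + (r : ℤ) - (l : ℤ) ∧
    (q.2.val : ℤ) = (p.2.val : ℤ) + (u : ℤ) - (d : ℤ) ∧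
    r + l + u + d = manhattan p q := by
  subst hr hl hu hd
  obtain ⟨h1, h2, h3, h4⟩ := main_aux as p q hrun hlen
  exact ⟨h1, h2, h3, h4, by rw [count_sum]; exact hlen⟩
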